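/- Smoothing preserves smoothness (Technical Lemma C). Let F : ℝ^d → ℝ be H_F-smooth. Then for every μ > 0 the function u ↦ F(x+μ·u) is γ-integrable for each x, and the Gaussian smoothed function F_μ(x) := ∫ F(x+μ·u) dγ(u) is H_F-smooth, i.e., F_μ is differentiable on ℝ^d and its gradient ∇F_μ is H_F-Lipschitz. -/

import Mathlib

open MeasureTheory ProbabilityTheory

/-- The standard Gaussian measure on `EuclideanSpace ℝ (Fin d)`, i.e. the `d`-fold
product of the standard Gaussian measure `N(0,1)` on `ℝ`. -/
noncomputable def stdGaussian (d : ℕ) : Measure (EuclideanSpace ℝ (Fin d)) :=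
  (Measure.pi fun _ : Fin d => gaussianReal 0 1).map
    (MeasurableEquiv.toLp 2 (Fin d → ℝ))

/-!
The Taylor bound `|F b - F a - ⟪∇F a, b - a⟫| ≤ H ‖b - a‖²` does everything. At `a = x` it gives
`F` quadratic growth, so `u ↦ F (x + μ u)` is integrable against the Gaussian, which has second
moments. At `a = x + μ u`, `b = y + μ u`, averaged over `u`, it gives the same bound for `F_μ`
with `∫ ∇F (x + μ u) dγ(u)` in place of `∇F x`, so this average is the gradient of `F_μ`; being
an average of `H`-Lipschitz functions of `x`, it is `H`-Lipschitz.
-/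

open Filter Asymptotics InnerProductSpace
open scoped NNReal RealInnerProductSpace

theorem stdGaussian_eq_stdGaussian_euclideanSpace (d : ℕ) :
    stdGaussian d = ProbabilityTheory.stdGaussian (EuclideanSpace ℝ (Fin d)) :=
  map_pi_eq_stdGaussian

instance (d : ℕ) : IsGaussian (stdGaussian d) := by
  rw [stdGaussian_eq_stdGaussian_euclideanSpace]; infer_instance

section Calculus

variable {E G : Type*} [NormedAddCommGroup E] [NormedSpace ℝ E]
  [NormedAddCommGroup G] [NormedSpace ℝ G]

theorem hasFDerivAt_of_norm_sub_sub_le_sq {g : E → G} {L : E →L[ℝ] G} {x : E} {C : ℝ}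
    (h : ∀ v, ‖g (x + v) - g x - L v‖ ≤ C * ‖v‖ ^ 2) : HasFDerivAt g L x :=
  hasFDerivAt_iff_isLittleO_nhds_zero.2 <|
    (IsBigO.of_bound C (Eventually.of_forall fun v => by simpa using h v)).trans_isLittleO
      (isLittleO_norm_pow_id one_lt_two)

theorem norm_sub_sub_le_of_lipschitzWith_fderiv {g : E → G} {g' : E → E →L[ℝ] G} {K : ℝ≥0}
    (hg : ∀ x, HasFDerivAt g (g' x) x) (hK : LipschitzWith K g') (a b : E) :
    ‖g b - g a - g' a (b - a)‖ ≤ K * ‖b - a‖ ^ 2 := by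
  have hbound : ∀ z ∈ Metric.closedBall a ‖b - a‖, ‖g' z - g' a‖ ≤ K * ‖b - a‖ := fun z hz => by
    rw [← dist_eq_norm]
    exact (hK.dist_le_mul z a).trans (by gcongr; exact hz)
  calc ‖g b - g a - g' a (b - a)‖ ≤ K * ‖b - a‖ * ‖b - a‖ :=
        (convex_closedBall a _).norm_image_sub_le_of_norm_hasFDerivWithin_le'
          (fun z _ => (hg z).hasFDerivWithinAt) hbound (Metric.mem_closedBall_self (norm_nonneg _))
          (by simp [dist_eq_norm])
    _ = K * ‖b - a‖ ^ 2 := by ring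

end Calculus

section Gradient

variable {E : Type*} [NormedAddCommGroup E] [InnerProductSpace ℝ E] [CompleteSpace E]

theorem hasGradientAt_of_abs_sub_sub_inner_le_sq {g : E → ℝ} {v x : E} {C : ℝ}
    (h : ∀ y, |g y - g x - ⟪v, y - x⟫| ≤ C * ‖y - x‖ ^ 2) : HasGradientAt g v x :=
  hasGradientAt_iff_hasFDerivAt.2 <| hasFDerivAt_of_norm_sub_sub_le_sq fun w => by
    simpa using h (x + w)

theorem abs_sub_sub_inner_le_of_lipschitzWith_gradient {f : E → ℝ} {K : ℝ≥0}
    (hf : Differentiable ℝ f) (hK : LipschitzWith K (gradient f)) (a b : E) :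
    |f b - f a - ⟪gradient f a, b - a⟫| ≤ K * ‖b - a‖ ^ 2 := by
  have hK' : LipschitzWith K fun x => toDual ℝ E (gradient f x) :=
    (toDual ℝ E).isometry.lipschitz.comp hK |>.weaken (by simp)
  simpa using norm_sub_sub_le_of_lipschitzWith_fderiv
    (fun x => (hf x).hasGradientAt.hasFDerivAt) hK' a b

end Gradient

section Integrability

variable {E : Type*} [NormedAddCommGroup E] [MeasurableSpace E] {ν : Measure E}
  [IsFiniteMeasure ν]

theorem integrable_of_norm_le_quadratic {G : Type*} [NormedAddCommGroup G] {g : E → G}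
    (hν : MemLp id 2 ν) (hg : AEStronglyMeasurable g ν) (a b c : ℝ)
    (hbound : ∀ u, ‖g u‖ ≤ a + b * ‖u‖ + c * ‖u‖ ^ 2) : Integrable g ν := by
  have h1 : Integrable (fun u => ‖u‖) ν := (hν.mono_exponent one_le_two).integrable le_rfl |>.norm
  have h2 : Integrable (fun u => ‖u‖ ^ 2) ν := by simpa using hν.integrable_norm_pow two_ne_zero
  exact (((integrable_const a).add (h1.const_mul b)).add (h2.const_mul c)).mono' hg
    (ae_of_all _ hbound)

theorem LipschitzWith.integrable_comp_add_smul [NormedSpace ℝ E] [OpensMeasurableSpace E]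
    {G : Type*} [NormedAddCommGroup G] [SecondCountableTopologyEither E G] {g : E → G} {K : ℝ≥0}
    (hν : MemLp id 2 ν) (hg : LipschitzWith K g) (x : E) (c : ℝ) :
    Integrable (fun u => g (x + c • u)) ν := by
  refine integrable_of_norm_le_quadratic hν
    (hg.continuous.comp (by fun_prop)).aestronglyMeasurable ‖g x‖ (K * |c|) 0 fun u => ?_
  have := hg.dist_le_mul (x + c • u) x
  rw [dist_eq_norm, dist_eq_norm, add_sub_cancel_left, norm_smul, Real.norm_eq_abs] at this
  calc ‖g (x + c • u)‖ ≤ ‖g x‖ + ‖g (x + c • u) - g x‖ := norm_le_insert' _ _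
    _ ≤ _ := by nlinarith

end Integrability

section Integral

variable {α Ω G : Type*} [PseudoMetricSpace α] [MeasurableSpace Ω] {P : Measure Ω}
  [IsProbabilityMeasure P] [NormedAddCommGroup G] [NormedSpace ℝ G] {K : ℝ≥0}

theorem lipschitzWith_integral {g : α → Ω → G} (hint : ∀ x, Integrable (g x) P)
    (hg : ∀ ω, LipschitzWith K (g · ω)) :
    LipschitzWith K fun x => ∫ ω, g x ω ∂P := by
  refine LipschitzWith.of_dist_le_mul fun x y => ?_
  rw [dist_eq_norm, ← integral_sub (hint x) (hint y)]
  calc ‖∫ ω, g x ω - g y ω ∂P‖ ≤ K * dist x y * P.real Set.univ :=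
        norm_integral_le_of_norm_le_const <| ae_of_all P fun ω => by
          rw [← dist_eq_norm]; exact (hg ω).dist_le_mul x y
    _ = K * dist x y := by simp

end Integral

section Smoothing

variable {E : Type*} [NormedAddCommGroup E] [InnerProductSpace ℝ E] [CompleteSpace E]
  [MeasurableSpace E] [OpensMeasurableSpace E]
  {ν : Measure E} {f : E → ℝ} {K : ℝ≥0}

theorem integrable_comp_add_smul_of_lipschitzWith_gradient [IsFiniteMeasure ν]
    (hν : MemLp id 2 ν) (hf : Differentiable ℝ f) (hK : LipschitzWith K (gradient f))
    (x : E) (c : ℝ) : Integrable (fun u => f (x + c • u)) ν := by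
  refine integrable_of_norm_le_quadratic hν
    (hf.continuous.comp (by fun_prop)).aestronglyMeasurable |f x| (‖gradient f x‖ * |c|)
    (K * c ^ 2) fun u => ?_
  have htaylor := abs_sub_sub_inner_le_of_lipschitzWith_gradient hf hK x (x + c • u)
  have hinner := abs_real_inner_le_norm (gradient f x) (c • u)
  simp only [add_sub_cancel_left, norm_smul, Real.norm_eq_abs, mul_pow, sq_abs] at htaylor hinner ⊢
  have := abs_add_three (f x) ⟪gradient f x, c • u⟫ (f (x + c • u) - f x - ⟪gradient f x, c • u⟫)
  rw [add_add_sub_cancel, add_sub_cancel] at this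
  nlinarith

theorem hasGradientAt_integral_comp_add_smul [SecondCountableTopology E] [IsProbabilityMeasure ν]
    (hν : MemLp id 2 ν) (hf : Differentiable ℝ f) (hK : LipschitzWith K (gradient f))
    (x : E) (c : ℝ) :
    HasGradientAt (fun y => ∫ u, f (y + c • u) ∂ν) (∫ u, gradient f (x + c • u) ∂ν) x := by
  refine hasGradientAt_of_abs_sub_sub_inner_le_sq (C := K) fun y => ?_
  have hint := integrable_comp_add_smul_of_lipschitzWith_gradient hν hf hK
  have hint_diff : Integrable (fun u => f (y + c • u) - f (x + c • u)) ν :=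
    (hint y c).sub (hint x c)
  have hint_inner : Integrable (fun u => ⟪gradient f (x + c • u), y - x⟫) ν :=
    (hK.integrable_comp_add_smul hν x c).inner_const (y - x)
  have hsplit : ∫ u, f (y + c • u) ∂ν - ∫ u, f (x + c • u) ∂ν
      - ⟪∫ u, gradient f (x + c • u) ∂ν, y - x⟫
      = ∫ u, (f (y + c • u) - f (x + c • u) - ⟪gradient f (x + c • u), y - x⟫) ∂ν := by
    rw [integral_sub hint_diff hint_inner, integral_sub (hint y c) (hint x c),
      real_inner_comm, ← integral_inner (hK.integrable_comp_add_smul hν x c)]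
    simp only [real_inner_comm]
  have hpointwise : ∀ u, ‖f (y + c • u) - f (x + c • u) - ⟪gradient f (x + c • u), y - x⟫‖
      ≤ K * ‖y - x‖ ^ 2 := fun u => by
    have := abs_sub_sub_inner_le_of_lipschitzWith_gradient hf hK (x + c • u) (y + c • u)
    rwa [add_sub_add_right_eq_sub] at this
  calc _ = ‖∫ u, (f (y + c • u) - f (x + c • u) - ⟪gradient f (x + c • u), y - x⟫) ∂ν‖ := by
        rw [hsplit, Real.norm_eq_abs]
    _ ≤ K * ‖y - x‖ ^ 2 * ν.real Set.univ :=
        norm_integral_le_of_norm_le_const (ae_of_all ν hpointwise)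
    _ = K * ‖y - x‖ ^ 2 := by simp

end Smoothing

theorem smoothing_preserves_smoothness_general
    (d : ℕ)
    (F : EuclideanSpace ℝ (Fin d) → ℝ)
    (H_F : ℝ)
    (hFdiff : Differentiable ℝ F)
    (hFgradLip : LipschitzWith H_F.toNNReal (gradient F))
    (μ : ℝ)
    (Fμ : EuclideanSpace ℝ (Fin d) → ℝ)
    (hFμ : ∀ y, Fμ y = ∫ u, F (y + μ • u) ∂(stdGaussian d)) :
    (∀ x : EuclideanSpace ℝ (Fin d),
        Integrable (fun u => F (x + μ • u)) (stdGaussian d)) ∧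
      Differentiable ℝ Fμ ∧ LipschitzWith H_F.toNNReal (gradient Fμ) := by
  obtain rfl : Fμ = fun y => ∫ u, F (y + μ • u) ∂(stdGaussian d) := funext hFμ
  have hγ : MemLp id 2 (stdGaussian d) := IsGaussian.memLp_two_id
  have hgrad x := hasGradientAt_integral_comp_add_smul hγ hFdiff hFgradLip x μ
  refine ⟨fun x => integrable_comp_add_smul_of_lipschitzWith_gradient hγ hFdiff hFgradLip x μ,
    fun x => (hgrad x).differentiableAt, ?_⟩
  rw [funext fun x => (hgrad x).gradient]
  exact lipschitzWith_integral (hFgradLip.integrable_comp_add_smul hγ · μ)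
    fun u => (hFgradLip.comp (IsometryEquiv.addRight (μ • u)).isometry.lipschitz).weaken (by simp)

/-- Gaussian smoothing preserves smoothness (Technical Lemma C). -/
theorem smoothing_preserves_smoothness
    (d : ℕ) (hd : 0 < d)
    (F : EuclideanSpace ℝ (Fin d) → ℝ)
    (H_F : ℝ) (hH_F : 0 ≤ H_F)
    (hFdiff : Differentiable ℝ F)
    (hFgradLip : LipschitzWith H_F.toNNReal (gradient F))
    (μ : ℝ) (hμ : 0 < μ)
    (Fμ : EuclideanSpace ℝ (Fin d) → ℝ)
    (hFμ : ∀ y, Fμ y = ∫ u, F (y + μ • u) ∂(stdGaussian d)) :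
    (∀ x : EuclideanSpace ℝ (Fin d),
        Integrable (fun u => F (x + μ • u)) (stdGaussian d)) ∧
      Differentiable ℝ Fμ ∧ LipschitzWith H_F.toNNReal (gradient Fμ) :=
  smoothing_preserves_smoothness_general d F H_F hFdiff hFgradLip μ Fμ hFμ
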